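/- arXiv:2305.15206 — 8 statements merged into one kernel-verified Lean document; each statement's English description precedes it below -/
import Mathlib

section
/- Let P and Q be two probability distributions on a finite set X and let f : X → ℝ. Then the total variation distance between P and Q satisfies d_TV(P,Q) ≥ (E_Q[f] − E_P[f])² / ((E_Q[f] − E_P[f])² + 2 Var_P(f) + 2 Var_Q(f)). -/
open Finset

theorem stmt0 {X : Type*} [Fintype X] (P Q : X → ℝ) (f : X → ℝ)
    (hP : ∀ x, 0 ≤ P x) (hQ : ∀ x, 0 ≤ Q x)
    (hPs : ∑ x, P x = 1) (hQs : ∑ x, Q x = 1) :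
    (1 / 2) * ∑ x, |P x - Q x| ≥
      ((∑ x, f x * Q x) - ∑ x, f x * P x) ^ 2 /
        (((∑ x, f x * Q x) - ∑ x, f x * P x) ^ 2 +
          2 * ((∑ x, (f x) ^ 2 * P x) - (∑ x, f x * P x) ^ 2) +
          2 * ((∑ x, (f x) ^ 2 * Q x) - (∑ x, f x * Q x) ^ 2)) := by
  set a := ∑ x, f x * P x with ha
  set b := ∑ x, f x * Q x with hb
  set sP := ∑ x, (f x) ^ 2 * P x with hsP
  set sQ := ∑ x, (f x) ^ 2 * Q x with hsQ
  set c : ℝ := (a + b) / 2 with hc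
  set w : X → ℝ := fun x => |P x - Q x| with hwdef
  have hw0 : ∀ x, 0 ≤ w x := fun x => abs_nonneg _
  have hwsum0 : (0:ℝ) ≤ ∑ x, w x := Finset.sum_nonneg fun x _ => hw0 x
  -- expansion lemma
  have expand : ∀ (R : X → ℝ), (∑ x, R x = 1) → ∀ d : ℝ,
      ∑ x, (f x - d) ^ 2 * R x
        = (∑ x, (f x) ^ 2 * R x) - 2 * d * (∑ x, f x * R x) + d ^ 2 := by
    intro R hRs d
    have h1 : ∀ x ∈ Finset.univ (α := X), (f x - d) ^ 2 * R x
        = (f x) ^ 2 * R x - 2 * d * (f x * R x) + d ^ 2 * R x := fun x _ => by ring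
    rw [Finset.sum_congr rfl h1, Finset.sum_add_distrib, Finset.sum_sub_distrib,
      ← Finset.mul_sum, ← Finset.mul_sum, hRs, mul_one]
  have hVP : 0 ≤ sP - a ^ 2 := by
    have h := expand P hPs a
    have h2 : sP - 2 * a * a + a ^ 2 = sP - a ^ 2 := by ring
    rw [← ha, h2] at h
    rw [← h]
    exact Finset.sum_nonneg fun x _ => mul_nonneg (sq_nonneg _) (hP x)
  have hVQ : 0 ≤ sQ - b ^ 2 := by
    have h := expand Q hQs b
    have h2 : sQ - 2 * b * b + b ^ 2 = sQ - b ^ 2 := by ring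
    rw [← hb, h2] at h
    rw [← h]
    exact Finset.sum_nonneg fun x _ => mul_nonneg (sq_nonneg _) (hQ x)
  set D : ℝ := (b - a) ^ 2 + 2 * (sP - a ^ 2) + 2 * (sQ - b ^ 2) with hD
  have hD0 : 0 ≤ D := by positivity
  have hLHS0 : (0:ℝ) ≤ (1 / 2) * ∑ x, w x := by positivity
  rcases eq_or_lt_of_le hD0 with hDz | hDpos
  · rw [← hDz, div_zero]
    exact hLHS0
  -- main inequality : (b - a)^2 ≤ D * ((1/2) * ∑ w)
  have hdelta : b - a = ∑ x, (f x - c) * (Q x - P x) := by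
    have h1 : ∀ x ∈ Finset.univ (α := X), (f x - c) * (Q x - P x)
        = f x * Q x - f x * P x - c * Q x + c * P x := fun x _ => by ring
    rw [Finset.sum_congr rfl h1, Finset.sum_add_distrib, Finset.sum_sub_distrib,
      Finset.sum_sub_distrib, ← Finset.mul_sum, ← Finset.mul_sum, hPs, hQs]
    ring
  have habs : |b - a| ≤ ∑ x, |f x - c| * w x := by
    rw [hdelta]
    calc |∑ x, (f x - c) * (Q x - P x)| ≤ ∑ x, |(f x - c) * (Q x - P x)| :=
          Finset.abs_sum_le_sum_abs _ _
      _ = ∑ x, |f x - c| * w x := by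
          refine Finset.sum_congr rfl fun x _ => ?_
          rw [abs_mul, abs_sub_comm (Q x) (P x)]
  have hCS : (∑ x, |f x - c| * w x) ^ 2 ≤ (∑ x, (f x - c) ^ 2 * w x) * ∑ x, w x := by
    have := Finset.sum_mul_sq_le_sq_mul_sq Finset.univ
      (fun x => |f x - c| * Real.sqrt (w x)) (fun x => Real.sqrt (w x))
    calc (∑ x, |f x - c| * w x) ^ 2
        = (∑ x, (|f x - c| * Real.sqrt (w x)) * Real.sqrt (w x)) ^ 2 := by
          congr 1
          refine Finset.sum_congr rfl fun x _ => ?_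
          rw [mul_assoc, Real.mul_self_sqrt (hw0 x)]
      _ ≤ (∑ x, (|f x - c| * Real.sqrt (w x)) ^ 2) * ∑ x, Real.sqrt (w x) ^ 2 := this
      _ = (∑ x, (f x - c) ^ 2 * w x) * ∑ x, w x := by
          congr 1
          · refine Finset.sum_congr rfl fun x _ => ?_
            rw [mul_pow, sq_abs, Real.sq_sqrt (hw0 x)]
          · exact Finset.sum_congr rfl fun x _ => Real.sq_sqrt (hw0 x)
  have hwle : ∑ x, (f x - c) ^ 2 * w x ≤ D / 2 := by
    have step : ∑ x, (f x - c) ^ 2 * w x ≤ ∑ x, (f x - c) ^ 2 * (P x + Q x) := by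
      refine Finset.sum_le_sum fun x _ => ?_
      refine mul_le_mul_of_nonneg_left ?_ (sq_nonneg _)
      calc w x = |P x - Q x| := rfl
        _ ≤ |P x| + |Q x| := abs_sub _ _
        _ = P x + Q x := by rw [abs_of_nonneg (hP x), abs_of_nonneg (hQ x)]
    have heq : ∑ x, (f x - c) ^ 2 * (P x + Q x) = D / 2 := by
      have h1 : ∀ x ∈ Finset.univ (α := X), (f x - c) ^ 2 * (P x + Q x)
          = (f x - c) ^ 2 * P x + (f x - c) ^ 2 * Q x := fun x _ => by ring
      rw [Finset.sum_congr rfl h1, Finset.sum_add_distrib, expand P hPs c,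
        expand Q hQs c, ← ha, ← hb, hD, hc]
      ring
    linarith
  have hkey : (b - a) ^ 2 ≤ D * ((1 / 2) * ∑ x, w x) := by
    have h1 : (b - a) ^ 2 ≤ (∑ x, |f x - c| * w x) ^ 2 := by
      rw [← sq_abs (b - a)]
      exact pow_le_pow_left₀ (abs_nonneg _) habs 2
    have h2 : (∑ x, (f x - c) ^ 2 * w x) * (∑ x, w x) ≤ (D / 2) * ∑ x, w x :=
      mul_le_mul_of_nonneg_right hwle hwsum0
    nlinarith [hCS]
  rw [ge_iff_le, div_le_iff₀ hDpos]
  linarith [hkey]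
end

section
/- For 1 ≤ m ≤ n with m ≥ n/2, among all binary vectors x ∈ {0,1}^n with exactly m ones, the quantity F(x) = Σ_{i=2}^{n} [x_i ω_{i−1} + (1−x_i)(1−ω_{i−1})], where ω_j = (x_1+⋯+x_j)/j, is maximized by the vector with all m ones placed first followed by n−m zeros. -/
open Finset

noncomputable def Fstat (n : ℕ) (x : ℕ → ℝ) : ℝ :=
  ∑ i ∈ Finset.Icc 2 n,
    (x i * ((∑ j ∈ Finset.Icc 1 (i - 1), x j) / ((i : ℝ) - 1)) +
      (1 - x i) * (1 - (∑ j ∈ Finset.Icc 1 (i - 1), x j) / ((i : ℝ) - 1)))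

lemma e_sum_expand (x : ℕ → ℝ) (k : ℕ) (a : ℝ) :
    ∑ j ∈ Icc 1 k, (a + x j - 2 * a * x j)
      = (k : ℝ) * a + (∑ j ∈ Icc 1 k, x j) - 2 * a * (∑ j ∈ Icc 1 k, x j) := by
  rw [Finset.sum_sub_distrib, Finset.sum_add_distrib, Finset.sum_const, ← Finset.mul_sum,
    Nat.card_Icc, nsmul_eq_mul]
  push_cast
  ring

lemma sumc (x : ℕ → ℝ) : ∀ n : ℕ, (∀ i ∈ Icc 1 n, x i = 0 ∨ x i = 1) →
    ∑ i ∈ Icc 2 n, ∑ j ∈ Icc 1 (i - 1), (x i + x j - 2 * x i * x j)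
      = (∑ j ∈ Icc 1 n, x j) * ((n : ℝ) - ∑ j ∈ Icc 1 n, x j) := by
  intro n
  induction n with
  | zero => intro _; simp
  | succ n ih =>
    intro hx
    have hx' : ∀ i ∈ Icc 1 n, x i = 0 ∨ x i = 1 := fun i hi => by
      refine hx i ?_; simp only [mem_Icc] at hi ⊢; omega
    have hxa : x (n + 1) = 0 ∨ x (n + 1) = 1 := hx (n + 1) (by simp)
    have h2 : x (n + 1) * x (n + 1) = x (n + 1) := by
      rcases hxa with h | h <;> rw [h] <;> ring
    rcases Nat.eq_zero_or_pos n with rfl | hn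
    · have he : Icc 2 1 = (∅ : Finset ℕ) := rfl
      simp only [he, Finset.sum_empty, Icc_self, Finset.sum_singleton]
      push_cast
      linear_combination h2
    · rw [Finset.sum_Icc_succ_top (by omega : 2 ≤ n + 1),
        Finset.sum_Icc_succ_top (by omega : 1 ≤ n + 1), ih hx',
        show n + 1 - 1 = n from rfl, e_sum_expand]
      push_cast
      linear_combination h2

lemma fstat_eq (n : ℕ) (x : ℕ → ℝ) :
    Fstat n x = ∑ i ∈ Icc 2 n,
      (1 - (∑ j ∈ Icc 1 (i - 1), (x i + x j - 2 * x i * x j)) / ((i : ℝ) - 1)) := by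
  unfold Fstat
  refine Finset.sum_congr rfl fun i hi => ?_
  have hi2 : 2 ≤ i := (Finset.mem_Icc.1 hi).1
  have h2 : (2 : ℝ) ≤ (i : ℝ) := by exact_mod_cast hi2
  have hd : ((i : ℝ) - 1) ≠ 0 := by linarith
  have hc : ((i - 1 : ℕ) : ℝ) = (i : ℝ) - 1 := by
    have h1 : 1 ≤ i := by omega
    push_cast [h1]
    ring
  rw [e_sum_expand, hc]
  field_simp
  ring

lemma blocksum (m n : ℕ) (h : m ≤ n) :
    ∑ i ∈ Icc 1 n, (if i ≤ m then (1 : ℝ) else 0) = m := by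
  rw [Finset.sum_boole]
  have : (Icc 1 n).filter (fun i => i ≤ m) = Icc 1 m := by
    ext j; simp only [mem_filter, mem_Icc]; omega
  rw [this, Nat.card_Icc]
  simp

lemma blockc (m i : ℕ) (hi2 : 2 ≤ i) :
    ∑ j ∈ Icc 1 (i - 1),
        ((if i ≤ m then (1 : ℝ) else 0) + (if j ≤ m then (1 : ℝ) else 0)
          - 2 * (if i ≤ m then (1 : ℝ) else 0) * (if j ≤ m then (1 : ℝ) else 0))
      = if i ≤ m then 0 else (m : ℝ) := by
  by_cases h : i ≤ m
  · simp only [h, if_true]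
    apply Finset.sum_eq_zero
    intro j hj
    have hjm : j ≤ m := by simp only [mem_Icc] at hj; omega
    simp only [hjm, if_true]
    ring
  · simp only [h, if_false]
    have hcong : ∀ j ∈ Icc 1 (i - 1),
        (0 : ℝ) + (if j ≤ m then (1 : ℝ) else 0)
          - 2 * 0 * (if j ≤ m then (1 : ℝ) else 0) = (if j ≤ m then (1 : ℝ) else 0) := by
      intro j _; ring
    rw [Finset.sum_congr rfl hcong, blocksum m (i - 1) (by omega)]

theorem stmt8 (m n : ℕ) (hm1 : 1 ≤ m) (hmn : m ≤ n) (hhalf : n ≤ 2 * m)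
    (x : ℕ → ℝ) (hx01 : ∀ i ∈ Finset.Icc 1 n, x i = 0 ∨ x i = 1)
    (hsum : ∑ i ∈ Finset.Icc 1 n, x i = m) :
    Fstat n x ≤ Fstat n (fun i => if i ≤ m then 1 else 0) := by
  have hmR : (0 : ℝ) < m := by exact_mod_cast hm1
  have hmnR : (m : ℝ) ≤ n := by exact_mod_cast hmn
  have hhalfR : (n : ℝ) ≤ 2 * m := by exact_mod_cast hhalf
  set c : ℕ → ℝ := fun i => ∑ j ∈ Icc 1 (i - 1), (x i + x j - 2 * x i * x j) with hc
  set cb : ℕ → ℝ := fun i =>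
    ∑ j ∈ Icc 1 (i - 1),
      ((if i ≤ m then (1 : ℝ) else 0) + (if j ≤ m then (1 : ℝ) else 0)
        - 2 * (if i ≤ m then (1 : ℝ) else 0) * (if j ≤ m then (1 : ℝ) else 0)) with hcb
  have hblk01 : ∀ i ∈ Icc 1 n, (if i ≤ m then (1 : ℝ) else 0) = 0
      ∨ (if i ≤ m then (1 : ℝ) else 0) = 1 := by
    intro i _; by_cases h : i ≤ m <;> simp [h]
  have hsum_c : ∑ i ∈ Icc 2 n, c i = (m : ℝ) * ((n : ℝ) - m) := by
    rw [hc, sumc x n hx01, hsum]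
  have hsum_cb : ∑ i ∈ Icc 2 n, cb i = (m : ℝ) * ((n : ℝ) - m) := by
    rw [hcb, sumc (fun i => if i ≤ m then (1 : ℝ) else 0) n hblk01,
      blocksum m n hmn]
  -- bounds on c
  have hcbounds : ∀ i ∈ Icc 2 n, 0 ≤ c i ∧ c i ≤ m := by
    intro i hi
    obtain ⟨hi2, hin⟩ := mem_Icc.1 hi
    have hsub : Icc 1 (i - 1) ⊆ Icc 1 n := Finset.Icc_subset_Icc_right (by omega)
    have hxnn : ∀ j ∈ Icc 1 n, 0 ≤ x j := by
      intro j hj; rcases hx01 j hj with h | h <;> rw [h] <;> norm_num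
    have hxle : ∀ j ∈ Icc 1 n, x j ≤ 1 := by
      intro j hj; rcases hx01 j hj with h | h <;> rw [h] <;> norm_num
    set S : ℝ := ∑ j ∈ Icc 1 (i - 1), x j with hS
    have hS0 : 0 ≤ S := Finset.sum_nonneg fun j hj => hxnn j (hsub hj)
    have hSm : S ≤ m := by
      rw [← hsum]
      exact Finset.sum_le_sum_of_subset_of_nonneg hsub fun j hj _ => hxnn j hj
    have hcard : ((i - 1 : ℕ) : ℝ) = (i : ℝ) - 1 := by
      have h1 : 1 ≤ i := by omega
      push_cast [h1]; ring
    have hSub : S ≤ (i : ℝ) - 1 := by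
      have h := Finset.sum_le_card_nsmul (Icc 1 (i - 1)) x 1
        (fun j hj => hxle j (hsub hj))
      rw [Nat.card_Icc, nsmul_eq_mul, Nat.add_sub_cancel, hcard, mul_one] at h
      exact h
    have hSlow : (i : ℝ) - 1 - ((n : ℝ) - m) ≤ S := by
      have hsd : ∑ j ∈ Icc 1 n \ Icc 1 (i - 1), x j + S = (m : ℝ) := by
        rw [hS, Finset.sum_sdiff hsub, hsum]
      have hb := Finset.sum_le_card_nsmul (Icc 1 n \ Icc 1 (i - 1)) x 1
        (fun j hj => hxle j (Finset.mem_sdiff.1 hj).1)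
      rw [nsmul_eq_mul, mul_one] at hb
      have hcards : (Icc 1 n \ Icc 1 (i - 1)).card = n - (i - 1) := by
        rw [Finset.card_sdiff_of_subset hsub, Nat.card_Icc, Nat.card_Icc]
        omega
      have hcastR : (((Icc 1 n \ Icc 1 (i - 1)).card : ℕ) : ℝ)
          = (n : ℝ) - ((i : ℝ) - 1) := by
        rw [hcards]
        have h1 : i - 1 ≤ n := by omega
        rw [Nat.cast_sub h1, hcard]
      rw [hcastR] at hb
      linarith
    have hcval : c i = ((i : ℝ) - 1) * x i + S - 2 * x i * S := by
      rw [hc]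
      simp only
      rw [e_sum_expand, hcard, ← hS]
    rcases hx01 i (mem_Icc.2 ⟨by omega, hin⟩) with h | h
    · rw [hcval, h]
      constructor <;> · ring_nf; linarith
    · rw [hcval, h]
      constructor <;> · ring_nf; linarith
  -- the per-term comparison
  have key : ∀ i ∈ Icc 2 n,
      (c i - cb i) / m ≤ (c i - cb i) / ((i : ℝ) - 1) := by
    intro i hi
    obtain ⟨hi2, hin⟩ := mem_Icc.1 hi
    have hiR : (2 : ℝ) ≤ (i : ℝ) := by exact_mod_cast hi2
    have hinR : (i : ℝ) ≤ n := by exact_mod_cast hin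
    have hd : (0 : ℝ) < (i : ℝ) - 1 := by linarith
    obtain ⟨hc0, hcm⟩ := hcbounds i hi
    have hcbv : cb i = if i ≤ m then 0 else (m : ℝ) := blockc m i hi2
    rw [div_le_div_iff₀ hmR hd]
    by_cases h : i ≤ m
    · have hiRm : (i : ℝ) ≤ m := by exact_mod_cast h
      rw [hcbv, if_pos h]
      nlinarith
    · have hiRm : (m : ℝ) + 1 ≤ i := by exact_mod_cast (by omega : m + 1 ≤ i)
      rw [hcbv, if_neg h]
      nlinarith
  have H : ∑ i ∈ Icc 2 n, (c i - cb i) / m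
      ≤ ∑ i ∈ Icc 2 n, (c i - cb i) / ((i : ℝ) - 1) :=
    Finset.sum_le_sum key
  have Hz : ∑ i ∈ Icc 2 n, (c i - cb i) / m = 0 := by
    rw [← Finset.sum_div, Finset.sum_sub_distrib, hsum_c, hsum_cb]
    simp
  have Hsplit : ∑ i ∈ Icc 2 n, (c i - cb i) / ((i : ℝ) - 1)
      = (∑ i ∈ Icc 2 n, c i / ((i : ℝ) - 1))
        - ∑ i ∈ Icc 2 n, cb i / ((i : ℝ) - 1) := by
    rw [← Finset.sum_sub_distrib]
    exact Finset.sum_congr rfl fun i _ => by rw [sub_div]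
  rw [fstat_eq n x, fstat_eq n (fun i => if i ≤ m then (1 : ℝ) else 0)]
  rw [Finset.sum_sub_distrib, Finset.sum_sub_distrib]
  have := H
  rw [Hz, Hsplit] at this
  linarith
end

section
/- Local exchange inequality (case i+1 ≥ j): Let a ∈ {0,1}, b = 1−a, and let x start with i copies of a, then j copies of b, then one a (with i ≥ 1, j ≥ 1, i+j+1 ≤ n), and let x' be obtained by moving that a to the front (i+1 copies of a, then j copies of b, rest unchanged). If i+1 ≥ j, then F(x') ≥ F(x), where F(x) = Σ_{i=2}^{n} [x_i ω_{i−1} + (1−x_i)(1−ω_{i−1})] and ω_j is the running average. -/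
open Finset

theorem stmt9 (n i j : ℕ) (hi : 1 ≤ i) (hj : 1 ≤ j) (hn : i + j + 1 ≤ n)
    (hij : j ≤ i + 1) (a : ℝ) (ha : a = 0 ∨ a = 1) (y : ℕ → ℝ)
    (hy01 : ∀ k, y k = 0 ∨ y k = 1)
    (x x' : ℕ → ℝ)
    (hx : ∀ k, x k =
      if k ≤ i then a else if k ≤ i + j then 1 - a else if k = i + j + 1 then a else y k)
    (hx' : ∀ k, x' k = if k ≤ i + 1 then a else if k ≤ i + j + 1 then 1 - a else y k) :
    Fstat n x ≤ Fstat n x' := by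
  have hIoc : ∀ m : ℕ, Icc 1 m = Ioc 0 m := fun m => Finset.Icc_add_one_left_eq_Ioc 0 m
  -- prefix sums
  have hS1 : ∀ m : ℕ, m ≤ i → ∑ l ∈ Icc 1 m, x l = (m : ℝ) * a := by
    intro m hm
    rw [Finset.sum_congr rfl fun l hl => by
      rw [hx l, if_pos ((mem_Icc.mp hl).2.trans hm)]]
    rw [Finset.sum_const, Nat.card_Icc]
    simp
  have hS1' : ∀ m : ℕ, m ≤ i + 1 → ∑ l ∈ Icc 1 m, x' l = (m : ℝ) * a := by
    intro m hm
    rw [Finset.sum_congr rfl fun l hl => by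
      rw [hx' l, if_pos ((mem_Icc.mp hl).2.trans hm)]]
    rw [Finset.sum_const, Nat.card_Icc]
    simp
  have hS2 : ∀ m : ℕ, i ≤ m → m ≤ i + j →
      ∑ l ∈ Icc 1 m, x l = (i : ℝ) * a + ((m : ℝ) - i) * (1 - a) := by
    intro m h1 h2
    rw [hIoc, ← Finset.sum_Ioc_consecutive _ (Nat.zero_le i) h1, ← hIoc, hS1 i le_rfl]
    have htail : ∑ l ∈ Ioc i m, x l = ((m - i : ℕ) : ℝ) * (1 - a) := by
      rw [Finset.sum_congr rfl fun l hl => by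
        obtain ⟨hl1, hl2⟩ := mem_Ioc.mp hl
        rw [hx l, if_neg (by omega), if_pos (by omega)]]
      rw [Finset.sum_const, Nat.card_Ioc]
      simp
    rw [htail, Nat.cast_sub h1]
  have hS2' : ∀ m : ℕ, i + 1 ≤ m → m ≤ i + j + 1 →
      ∑ l ∈ Icc 1 m, x' l = ((i : ℝ) + 1) * a + ((m : ℝ) - (i + 1)) * (1 - a) := by
    intro m h1 h2
    rw [hIoc, ← Finset.sum_Ioc_consecutive _ (Nat.zero_le (i + 1)) h1, ← hIoc,
      hS1' (i + 1) le_rfl]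
    have htail : ∑ l ∈ Ioc (i + 1) m, x' l = ((m - (i + 1) : ℕ) : ℝ) * (1 - a) := by
      rw [Finset.sum_congr rfl fun l hl => by
        obtain ⟨hl1, hl2⟩ := mem_Ioc.mp hl
        rw [hx' l, if_neg (by omega), if_pos (by omega)]]
      rw [Finset.sum_const, Nat.card_Ioc]
      simp
    rw [htail, Nat.cast_sub h1]
    push_cast
    ring
  have hS3 : ∀ m : ℕ, i + j + 1 ≤ m → ∑ l ∈ Icc 1 m, x l = ∑ l ∈ Icc 1 m, x' l := by
    intro m hm
    have hhead : ∑ l ∈ Icc 1 (i + j + 1), x l = ∑ l ∈ Icc 1 (i + j + 1), x' l := by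
      rw [show i + j + 1 = (i + j) + 1 from rfl,
        Finset.sum_Icc_succ_top (by omega) x, hS2 (i + j) (by omega) le_rfl,
        hS2' (i + j + 1) (by omega) le_rfl,
        hx (i + j + 1), if_neg (by omega), if_neg (by omega), if_pos rfl]
      push_cast
      ring
    have split1 : ∑ l ∈ Icc 1 m, x l =
        ∑ l ∈ Icc 1 (i + j + 1), x l + ∑ l ∈ Ioc (i + j + 1) m, x l := by
      rw [hIoc, hIoc, ← Finset.sum_Ioc_consecutive _ (Nat.zero_le (i + j + 1)) hm]
    have split2 : ∑ l ∈ Icc 1 m, x' l =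
        ∑ l ∈ Icc 1 (i + j + 1), x' l + ∑ l ∈ Ioc (i + j + 1) m, x' l := by
      rw [hIoc, hIoc, ← Finset.sum_Ioc_consecutive _ (Nat.zero_le (i + j + 1)) hm]
    rw [split1, split2, hhead]
    congr 1
    refine Finset.sum_congr rfl fun l hl => ?_
    obtain ⟨hl1, hl2⟩ := mem_Ioc.mp hl
    rw [hx l, hx' l, if_neg (by omega), if_neg (by omega), if_neg (by omega),
      if_neg (by omega), if_neg (by omega)]
  -- reduce to a sum of differences
  rw [← sub_nonneg, Fstat, Fstat, ← Finset.sum_sub_distrib]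
  set f : ℕ → ℝ := fun k =>
    (x' k * ((∑ l ∈ Icc 1 (k - 1), x' l) / ((k : ℝ) - 1)) +
      (1 - x' k) * (1 - (∑ l ∈ Icc 1 (k - 1), x' l) / ((k : ℝ) - 1))) -
    (x k * ((∑ l ∈ Icc 1 (k - 1), x l) / ((k : ℝ) - 1)) +
      (1 - x k) * (1 - (∑ l ∈ Icc 1 (k - 1), x l) / ((k : ℝ) - 1))) with hfdef
  have hIoc2 : Icc 2 n = Ioc 1 n := Finset.Icc_add_one_left_eq_Ioc 1 n
  rw [hIoc2]
  rw [← Finset.sum_Ioc_consecutive f (show 1 ≤ i + j + 1 by omega) (show i + j + 1 ≤ n by omega),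
    ← Finset.sum_Ioc_consecutive f (show 1 ≤ i + j by omega) (show i + j ≤ i + j + 1 by omega),
    ← Finset.sum_Ioc_consecutive f (show 1 ≤ i + 1 by omega) (show i + 1 ≤ i + j by omega),
    ← Finset.sum_Ioc_consecutive f (show 1 ≤ i by omega) (show i ≤ i + 1 by omega)]
  have hsingleton : ∀ m : ℕ, Ioc m (m + 1) = {m + 1} := by
    intro m; ext l; simp only [mem_Ioc, mem_singleton]; omega
  -- piece 1 : Ioc 1 i gives zero
  have hp1 : ∑ k ∈ Ioc 1 i, f k = 0 := by
    refine Finset.sum_eq_zero fun k hk => ?_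
    obtain ⟨hk1, hk2⟩ := mem_Ioc.mp hk
    have e1 : x k = a := by rw [hx k, if_pos hk2]
    have e1' : x' k = a := by rw [hx' k, if_pos (by omega)]
    have e2 : ∑ l ∈ Icc 1 (k - 1), x l = ((k - 1 : ℕ) : ℝ) * a := hS1 _ (by omega)
    have e2' : ∑ l ∈ Icc 1 (k - 1), x' l = ((k - 1 : ℕ) : ℝ) * a := hS1' _ (by omega)
    rw [hfdef]
    simp only [e1, e1', e2, e2']
    ring
  -- piece 2 : k = i+1 contributes 1
  have hp2 : ∑ k ∈ Ioc i (i + 1), f k = 1 := by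
    rw [hsingleton i, Finset.sum_singleton, hfdef]
    have e1 : x (i + 1) = 1 - a := by rw [hx, if_neg (by omega), if_pos (by omega)]
    have e1' : x' (i + 1) = a := by rw [hx', if_pos le_rfl]
    have e2 : ∑ l ∈ Icc 1 (i + 1 - 1), x l = (i : ℝ) * a := hS1 _ (by omega)
    have e2' : ∑ l ∈ Icc 1 (i + 1 - 1), x' l = (i : ℝ) * a := hS1' _ (by omega)
    have hi0 : (i : ℝ) ≠ 0 := Nat.cast_ne_zero.mpr (by omega)
    simp only [e1, e1', e2, e2']
    push_cast
    simp only [add_sub_cancel_right]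
    rcases ha with rfl | rfl <;> field_simp <;> norm_num
  -- piece 3 : middle terms equal -1/(k-1)
  have hp3 : ∀ k ∈ Ioc (i + 1) (i + j), f k = -(1 / ((k : ℝ) - 1)) := by
    intro k hk
    obtain ⟨hk1, hk2⟩ := mem_Ioc.mp hk
    have e1 : x k = 1 - a := by rw [hx, if_neg (by omega), if_pos (by omega)]
    have e1' : x' k = 1 - a := by rw [hx', if_neg (by omega), if_pos (by omega)]
    have e2 : ∑ l ∈ Icc 1 (k - 1), x l = (i : ℝ) * a + (((k - 1 : ℕ) : ℝ) - i) * (1 - a) :=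
      hS2 _ (by omega) (by omega)
    have e2' : ∑ l ∈ Icc 1 (k - 1), x' l =
        ((i : ℝ) + 1) * a + (((k - 1 : ℕ) : ℝ) - ((i : ℝ) + 1)) * (1 - a) :=
      hS2' _ (by omega) (by omega)
    have hcast : ((k - 1 : ℕ) : ℝ) = (k : ℝ) - 1 := by
      rw [Nat.cast_sub (by omega)]; norm_num
    have hc : (k : ℝ) - 1 ≠ 0 := by
      have h2k : (2 : ℝ) ≤ (k : ℝ) := by exact_mod_cast (show 2 ≤ k by omega)
      intro h; linarith
    rw [hfdef]
    simp only [e1, e1', e2, e2', hcast]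
    rcases ha with rfl | rfl <;> field_simp <;> ring
  -- piece 4 : k = i+j+1
  have hp4 : ∑ k ∈ Ioc (i + j) (i + j + 1), f k = ((j : ℝ) - 1 - i) / ((i : ℝ) + j) := by
    rw [hsingleton (i + j), Finset.sum_singleton, hfdef]
    have e1 : x (i + j + 1) = a := by
      rw [hx, if_neg (by omega), if_neg (by omega), if_pos rfl]
    have e1' : x' (i + j + 1) = 1 - a := by rw [hx', if_neg (by omega), if_pos le_rfl]
    have e2 : ∑ l ∈ Icc 1 (i + j + 1 - 1), x l =
        (i : ℝ) * a + (((i + j : ℕ) : ℝ) - i) * (1 - a) := hS2 _ (by omega) (by omega)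
    have e2' : ∑ l ∈ Icc 1 (i + j + 1 - 1), x' l =
        ((i : ℝ) + 1) * a + (((i + j : ℕ) : ℝ) - ((i : ℝ) + 1)) * (1 - a) :=
      hS2' _ (by omega) (by omega)
    have hc : (i : ℝ) + j ≠ 0 := by
      have : (0 : ℝ) < (i : ℝ) + j := by
        have h1 : (1 : ℝ) ≤ (i : ℝ) := by exact_mod_cast hi
        have h2 : (1 : ℝ) ≤ (j : ℝ) := by exact_mod_cast hj
        linarith
      exact this.ne'
    simp only [e1, e1', e2, e2']
    push_cast
    simp only [add_sub_cancel_right]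
    rcases ha with rfl | rfl <;> field_simp <;> ring
  -- piece 5 : tail is zero
  have hp5 : ∑ k ∈ Ioc (i + j + 1) n, f k = 0 := by
    refine Finset.sum_eq_zero fun k hk => ?_
    obtain ⟨hk1, hk2⟩ := mem_Ioc.mp hk
    have e1 : x k = x' k := by
      rw [hx k, hx' k, if_neg (by omega), if_neg (by omega), if_neg (by omega),
        if_neg (by omega), if_neg (by omega)]
    have e2 : ∑ l ∈ Icc 1 (k - 1), x l = ∑ l ∈ Icc 1 (k - 1), x' l := hS3 _ (by omega)
    rw [hfdef]
    simp only [e1, e2]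
    ring
  rw [hp1, hp2, hp4, hp5]
  -- bound the middle sum
  have hi1 : (1 : ℝ) ≤ (i : ℝ) := by exact_mod_cast hi
  have hj1 : (1 : ℝ) ≤ (j : ℝ) := by exact_mod_cast hj
  have hij1 : (j : ℝ) ≤ (i : ℝ) + 1 := by exact_mod_cast hij
  have hbound : -(((j : ℝ) - 1) / ((i : ℝ) + 1)) ≤ ∑ k ∈ Ioc (i + 1) (i + j), f k := by
    have hstep : ∀ k ∈ Ioc (i + 1) (i + j), -(1 / ((i : ℝ) + 1)) ≤ f k := by
      intro k hk
      obtain ⟨hk1, hk2⟩ := mem_Ioc.mp hk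
      rw [hp3 k hk]
      have h1 : (0 : ℝ) < (i : ℝ) + 1 := by linarith
      have h2 : (i : ℝ) + 1 ≤ (k : ℝ) - 1 := by
        have : ((i : ℕ) + 2 : ℝ) ≤ (k : ℝ) := by exact_mod_cast (show i + 2 ≤ k by omega)
        push_cast at this
        linarith
      exact neg_le_neg (one_div_le_one_div_of_le h1 h2)
    calc -(((j : ℝ) - 1) / ((i : ℝ) + 1))
        = (#(Ioc (i + 1) (i + j)) : ℕ) • (-(1 / ((i : ℝ) + 1))) := by
          rw [Nat.card_Ioc, nsmul_eq_mul]
          rw [show i + j - (i + 1) = j - 1 by omega, Nat.cast_sub hj]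
          push_cast
          ring
      _ ≤ ∑ k ∈ Ioc (i + 1) (i + j), f k := Finset.card_nsmul_le_sum _ _ _ hstep
  have key : ((j : ℝ) - 1) / ((i : ℝ) + 1) ≤ 1 + ((j : ℝ) - 1 - i) / ((i : ℝ) + j) := by
    have h1 : (0 : ℝ) < (i : ℝ) + 1 := by linarith
    have h2 : (0 : ℝ) < (i : ℝ) + j := by linarith
    rw [show (1 : ℝ) + ((j : ℝ) - 1 - i) / ((i : ℝ) + j) =
      (2 * (j : ℝ) - 1) / ((i : ℝ) + j) from by field_simp; ring]
    rw [div_le_div_iff₀ h1 h2]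
    nlinarith [mul_nonneg (by linarith : (0 : ℝ) ≤ (i : ℝ) + 1 - j)
      (by linarith : (0 : ℝ) ≤ (j : ℝ) - 1)]
  linarith [hbound, key]
end

section
/- For i ≥ 1 and 1 ≤ j ≤ i+1, one has j/(i+j) ≥ Σ_{k=1}^{j−1} k/((i+k)(i+k+1)). -/
open Finset

lemma stmt10_aux (i : ℕ) (hi : 1 ≤ i) :
    ∀ j, j ≤ i →
      ((j : ℝ) + 1) / ((i : ℝ) + j + 1) ≥
        ∑ k ∈ Finset.Icc 1 j, (k : ℝ) / (((i : ℝ) + k) * ((i : ℝ) + k + 1)) := by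
  intro j
  induction j with
  | zero =>
      intro _
      simp
      positivity
  | succ n ih =>
      intro hn
      have hn' : n ≤ i := le_of_lt hn
      have ihn := ih hn'
      rw [Finset.sum_Icc_succ_top (by omega : 1 ≤ n + 1)]
      have hI : (1 : ℝ) ≤ (i : ℝ) := by exact_mod_cast hi
      have hN : ((n : ℝ) + 1) ≤ (i : ℝ) := by exact_mod_cast hn
      have h1 : (0 : ℝ) < (i : ℝ) + n + 1 := by linarith
      have h2 : (0 : ℝ) < (i : ℝ) + n + 2 := by linarith
      have key : ((n : ℝ) + 1) / ((i : ℝ) + n + 1)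
            + ((n : ℝ) + 1) / (((i : ℝ) + n + 1) * ((i : ℝ) + n + 2))
          ≤ ((n : ℝ) + 2) / ((i : ℝ) + n + 2) := by
        rw [div_add_div _ _ (ne_of_gt h1) (by positivity), div_le_div_iff₀ (by positivity) h2]
        ring_nf
        nlinarith [mul_pos h1 h2]
      push_cast
      calc ∑ k ∈ Finset.Icc 1 n, (k : ℝ) / (((i : ℝ) + k) * ((i : ℝ) + k + 1))
            + ((n : ℝ) + 1) / (((i : ℝ) + (n + 1)) * ((i : ℝ) + (n + 1) + 1))
          ≤ ((n : ℝ) + 1) / ((i : ℝ) + n + 1)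
            + ((n : ℝ) + 1) / (((i : ℝ) + n + 1) * ((i : ℝ) + n + 2)) := by
            have := ihn
            apply add_le_add
            · linarith [ihn]
            · apply le_of_eq; ring_nf
        _ ≤ ((n : ℝ) + 2) / ((i : ℝ) + n + 2) := key
        _ = ((n : ℝ) + 1 + 1) / ((i : ℝ) + (n + 1) + 1) := by ring_nf

theorem stmt10 (i j : ℕ) (hi : 1 ≤ i) (hj1 : 1 ≤ j) (hj : j ≤ i + 1) :
    (j : ℝ) / (i + j) ≥
      ∑ k ∈ Finset.Icc 1 (j - 1), (k : ℝ) / (((i : ℝ) + k) * ((i : ℝ) + k + 1)) := by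
  obtain ⟨m, rfl⟩ : ∃ m, j = m + 1 := ⟨j - 1, by omega⟩
  have hm : m ≤ i := by omega
  have := stmt10_aux i hi m hm
  simpa [Nat.add_sub_cancel, add_assoc] using this
end

section
/- For i ≥ 1 and j ≥ i+1, one has j/(i+j) + Σ_{k=1}^{j−1} i/(i+k) ≥ Σ_{k=1}^{i} j/(j+k). -/
open Finset

theorem stmt11 (i j : ℕ) (hi : 1 ≤ i) (hj : i + 1 ≤ j) :
    (j : ℝ) / (i + j) + ∑ k ∈ Finset.Icc 1 (j - 1), (i : ℝ) / ((i : ℝ) + k) ≥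
      ∑ k ∈ Finset.Icc 1 i, (j : ℝ) / ((j : ℝ) + k) := by
  have hi1 : (1:ℝ) ≤ i := by exact_mod_cast hi
  have hji : (i:ℝ) + 1 ≤ j := by exact_mod_cast hj
  have hij_pos : (0:ℝ) < i + j := by linarith
  have hile : i ≤ j - 1 := by omega
  have hsplit : Finset.Icc 1 (j-1) = Finset.Icc 1 i ∪ Finset.Icc (i+1) (j-1) := by
    ext k; simp only [Finset.mem_Icc, Finset.mem_union]; omega
  have hdisj : Disjoint (Finset.Icc 1 i) (Finset.Icc (i+1) (j-1)) := by
    simp [Finset.disjoint_left]; omega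
  rw [hsplit, Finset.sum_union hdisj]
  -- Bound 1: per-term difference
  have hb1 : ∑ k ∈ Finset.Icc 1 i, ((j:ℝ) / ((j:ℝ) + k) - (i:ℝ) / ((i:ℝ) + k))
      ≤ (i : ℕ) • (((j:ℝ) - i) / (2 * (i + j))) := by
    have := Finset.sum_le_card_nsmul (Finset.Icc 1 i)
      (fun k => (j:ℝ) / ((j:ℝ) + k) - (i:ℝ) / ((i:ℝ) + k))
      (((j:ℝ) - i) / (2 * (i + j))) ?_
    · simpa [Nat.card_Icc] using this
    · intro k hk
      simp only [Finset.mem_Icc] at hk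
      show (j:ℝ) / ((j:ℝ) + k) - (i:ℝ) / ((i:ℝ) + k) ≤ ((j:ℝ) - i) / (2 * (i + j))
      have hk1 : (1:ℝ) ≤ k := by exact_mod_cast hk.1
      have hki : (k:ℝ) ≤ i := by exact_mod_cast hk.2
      have h1 : (0:ℝ) < (j:ℝ) + k := by linarith
      have h2 : (0:ℝ) < (i:ℝ) + k := by linarith
      rw [div_sub_div _ _ (ne_of_gt h1) (ne_of_gt h2), div_le_div_iff₀ (by positivity) (by positivity)]
      nlinarith [mul_nonneg (sub_nonneg.2 hki) (by linarith : (0:ℝ) ≤ (j:ℝ) - k),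
        mul_pos h1 h2, sq_nonneg ((k:ℝ))]
  -- Bound 2: extra terms
  have hb2 : ((Finset.Icc (i+1) (j-1)).card : ℕ) • ((i:ℝ) / ((i:ℝ) + j))
      ≤ ∑ k ∈ Finset.Icc (i+1) (j-1), (i:ℝ) / ((i:ℝ) + k) := by
    apply Finset.card_nsmul_le_sum
    intro k hk
    simp only [Finset.mem_Icc] at hk
    have hkj : (k:ℝ) ≤ (j:ℝ) - 1 := by
      have : (k:ℝ) ≤ ((j-1 : ℕ):ℝ) := by exact_mod_cast hk.2
      rw [Nat.cast_sub (by omega)] at this; simpa using this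
    have hk1 : (1:ℝ) ≤ k := by
      have : (1:ℝ) ≤ ((i+1:ℕ):ℝ) := by push_cast; linarith
      calc (1:ℝ) ≤ ((i+1:ℕ):ℝ) := this
        _ ≤ k := by exact_mod_cast hk.1
    apply div_le_div_of_nonneg_left (by linarith) (by linarith) (by linarith)
  have hcard : ((Finset.Icc (i+1) (j-1)).card : ℝ) = (j:ℝ) - 1 - i := by
    rw [Nat.card_Icc]
    have : j - 1 + 1 - (i + 1) = j - 1 - i := by omega
    rw [this, Nat.cast_sub (by omega), Nat.cast_sub (by omega)]
    push_cast; ring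
  rw [nsmul_eq_mul] at hb2
  rw [nsmul_eq_mul] at hb1
  rw [hcard] at hb2
  rw [Finset.sum_sub_distrib] at hb1
  have key : (j:ℝ) / (i + j) + ((j:ℝ) - 1 - i) * ((i:ℝ) / ((i:ℝ) + j))
      ≥ (i:ℝ) * (((j:ℝ) - i) / (2 * (i + j))) := by
    have e1 : (j:ℝ) / (↑i + ↑j) + ((j:ℝ) - 1 - i) * ((i:ℝ) / ((i:ℝ) + j)) =
        ((j:ℝ) + ((j:ℝ) - 1 - i) * i) / ((i:ℝ) + j) := by
      field_simp
    have e2 : (i:ℝ) * (((j:ℝ) - i) / (2 * (↑i + ↑j))) =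
        ((i:ℝ) * ((j:ℝ) - i) / 2) / ((i:ℝ) + j) := by
      field_simp
    rw [ge_iff_le, e1, e2]
    apply div_le_div_of_nonneg_right ?_ (le_of_lt hij_pos) <;>
    nlinarith [mul_nonneg (by linarith : (0:ℝ) ≤ (j:ℝ) - i) (by linarith : (0:ℝ) ≤ (i:ℝ))]
  linarith
end

section
/- For q ∈ [0,1/2], define sequences by K₁ = 1 and K_{n+1} ≤ (1 + 2/n + 1/n²) K_n + 2(n+1). Then K_n ≤ n² + 2 n² log n for all n ≥ 1. -/
theorem stmt16 (K : ℕ → ℝ) (hK1 : K 1 = 1)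
    (hrec : ∀ n : ℕ, 1 ≤ n →
      K (n + 1) ≤ (1 + 2 / (n : ℝ) + 1 / (n : ℝ) ^ 2) * K n + 2 * ((n : ℝ) + 1)) :
    ∀ n : ℕ, 1 ≤ n → K n ≤ (n : ℝ) ^ 2 + 2 * (n : ℝ) ^ 2 * Real.log n := by
  intro n hn
  induction n, hn using Nat.le_induction with
  | base => simp [hK1]
  | succ n hn ih =>
    have hn0 : (0:ℝ) < n := by exact_mod_cast hn
    have hfac : (1 + 2 / (n : ℝ) + 1 / (n : ℝ) ^ 2) = (((n:ℝ)+1)/n)^2 := by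
      field_simp; ring
    have h1 : K (n+1) ≤ (((n:ℝ)+1)/(n:ℝ))^2 * ((n:ℝ)^2 + 2*(n:ℝ)^2 * Real.log n)
        + 2*((n:ℝ)+1) := by
      calc K (n+1) ≤ (1 + 2/(n:ℝ) + 1/(n:ℝ)^2) * K n + 2*((n:ℝ)+1) := hrec n hn
        _ ≤ _ := by rw [hfac]; gcongr
    have hexp : (((n:ℝ)+1)/(n:ℝ))^2 * ((n:ℝ)^2 + 2*(n:ℝ)^2 * Real.log n)
        = ((n:ℝ)+1)^2 + 2*((n:ℝ)+1)^2 * Real.log n := by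
      field_simp
    have hlog : (1:ℝ)/((n:ℝ)+1) ≤ Real.log ((n:ℝ)+1) - Real.log n := by
      have h := Real.log_le_sub_one_of_pos (x := (n:ℝ)/((n:ℝ)+1)) (by positivity)
      rw [Real.log_div (by positivity) (by positivity)] at h
      have h2 : (n:ℝ)/((n:ℝ)+1) - 1 = -(1/((n:ℝ)+1)) := by field_simp; ring
      linarith
    have h3 : 2*((n:ℝ)+1) ≤ 2*((n:ℝ)+1)^2 * (Real.log ((n:ℝ)+1) - Real.log n) := by
      calc 2*((n:ℝ)+1) = 2*((n:ℝ)+1)^2 * (1/((n:ℝ)+1)) := by field_simp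
        _ ≤ _ := by gcongr
    have hcast : ((n+1 : ℕ):ℝ) = (n:ℝ)+1 := by push_cast; ring
    rw [hcast]
    nlinarith [h1, hexp, h3]
end

section
/- Consider the coupled linear recursions f_q(n+1) = a_n(q) f_q(n) + b_n(q) g_q(n), g_q(n+1) = c_n(q) g_q(n) + d_n(q) f_q(n), with f_q(1) = g_q(1) = 1, where a_n(q) = 1 + 2/n + 2q(1−q)/n², b_n(q) = (1−2q)²/n², c_n(q) = 1 + 2(1−2q)/n + (1−2q)²/n², d_n(q) = 2q/n + 2q(1−q)/n². Assume additionally that f_q(n) ≤ 2 g_q(n) for all n and both q. Then for 0 ≤ q₀ < q₁ ≤ 1/2 and all n ≥ 2: f_{q₀}(n) − f_{q₁}(n) ≥ (f_{q₀}(2) − f_{q₁}(2)) · ∏_{i=2}^{n−1} a_i(q₀), and g_{q₀}(n) − g_{q₁}(n) ≥ 0. -/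
open Finset

set_option maxHeartbeats 1000000 in
theorem stmt17 (q₀ q₁ : ℝ) (h0 : 0 ≤ q₀) (h01 : q₀ < q₁) (h1 : q₁ ≤ 1 / 2)
    (f g : ℝ → ℕ → ℝ)
    (hf1 : ∀ q ∈ ({q₀, q₁} : Set ℝ), f q 1 = 1)
    (hg1 : ∀ q ∈ ({q₀, q₁} : Set ℝ), g q 1 = 1)
    (hfrec : ∀ q ∈ ({q₀, q₁} : Set ℝ), ∀ n : ℕ, 1 ≤ n →
      f q (n + 1) = (1 + 2 / (n : ℝ) + 2 * q * (1 - q) / (n : ℝ) ^ 2) * f q n +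
        ((1 - 2 * q) ^ 2 / (n : ℝ) ^ 2) * g q n)
    (hgrec : ∀ q ∈ ({q₀, q₁} : Set ℝ), ∀ n : ℕ, 1 ≤ n →
      g q (n + 1) = (1 + 2 * (1 - 2 * q) / (n : ℝ) + (1 - 2 * q) ^ 2 / (n : ℝ) ^ 2) * g q n +
        (2 * q / (n : ℝ) + 2 * q * (1 - q) / (n : ℝ) ^ 2) * f q n)
    (hfg : ∀ q ∈ ({q₀, q₁} : Set ℝ), ∀ n : ℕ, f q n ≤ 2 * g q n) :
    ∀ n : ℕ, 2 ≤ n →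
      (f q₀ n - f q₁ n ≥ (f q₀ 2 - f q₁ 2) *
          ∏ i ∈ Finset.Icc 2 (n - 1), (1 + 2 / (i : ℝ) + 2 * q₀ * (1 - q₀) / (i : ℝ) ^ 2)) ∧
        g q₀ n - g q₁ n ≥ 0 := by
  have hq0mem : q₀ ∈ ({q₀, q₁} : Set ℝ) := Set.mem_insert _ _
  have hq1mem : q₁ ∈ ({q₀, q₁} : Set ℝ) := Set.mem_insert_of_mem _ rfl
  have hq0le : q₀ ≤ 1 / 2 := by linarith
  have hq10 : 0 ≤ q₁ := by linarith
  have hqq : q₀ * (1 - q₀) ≤ q₁ * (1 - q₁) := by nlinarith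
  have hq0nn : 0 ≤ q₀ * (1 - q₀) := by nlinarith
  -- values at 2
  have hf2 : ∀ q ∈ ({q₀, q₁} : Set ℝ), f q 2 = 4 - 2 * q + 2 * q ^ 2 := by
    intro q hq
    have h := hfrec q hq 1 le_rfl
    rw [hf1 q hq, hg1 q hq] at h
    norm_num at h
    rw [h]; ring
  have hg2 : ∀ q ∈ ({q₀, q₁} : Set ℝ), g q 2 = 4 - 4 * q + 2 * q ^ 2 := by
    intro q hq
    have h := hgrec q hq 1 le_rfl
    rw [hf1 q hq, hg1 q hq] at h
    norm_num at h
    rw [h]; ring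
  have hdf2 : 0 ≤ f q₀ 2 - f q₁ 2 := by
    rw [hf2 q₀ hq0mem, hf2 q₁ hq1mem]
    nlinarith [mul_pos (sub_pos.2 h01) (show (0:ℝ) < 1 - q₀ - q₁ by linarith)]
  intro n hn
  induction n with
  | zero => omega
  | succ m ih =>
    rcases Nat.lt_or_ge m 2 with hm | hm
    · have hm1 : m = 1 := by omega
      subst hm1
      constructor
      · norm_num
      · rw [hg2 q₀ hq0mem, hg2 q₁ hq1mem]
        nlinarith [mul_pos (sub_pos.2 h01) (show (0:ℝ) < 2 - q₀ - q₁ by linarith)]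
    · obtain ⟨hf', hg'⟩ := ih hm
      obtain ⟨k, rfl⟩ : ∃ k, m = k + 2 := ⟨m - 2, by omega⟩
      rw [show k + 2 - 1 = k + 1 from rfl] at hf'
      have hk2 : (1:ℕ) ≤ k + 2 := by omega
      have hF0 := hfrec q₀ hq0mem (k + 2) hk2
      have hF1 := hfrec q₁ hq1mem (k + 2) hk2
      have hG0 := hgrec q₀ hq0mem (k + 2) hk2
      have hG1 := hgrec q₁ hq1mem (k + 2) hk2
      have hFG1 := hfg q₁ hq1mem (k + 2)
      push_cast at hF0 hF1 hG0 hG1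
      have hMpos : (0:ℝ) < (k : ℝ) + 2 := by positivity
      set P : ℝ := ∏ i ∈ Finset.Icc 2 (k + 1),
        (1 + 2 / (i : ℝ) + 2 * q₀ * (1 - q₀) / (i : ℝ) ^ 2) with hP
      have hPnn : 0 ≤ P := by
        apply Finset.prod_nonneg
        intro i hi
        have hi2 : 2 ≤ i := (Finset.mem_Icc.mp hi).1
        have hipos : (0:ℝ) < (i:ℝ) := by exact_mod_cast Nat.lt_of_lt_of_le (by norm_num) hi2
        have h1i : 0 ≤ 2 / (i:ℝ) := by positivity
        have h2i : 0 ≤ 2 * q₀ * (1 - q₀) / (i:ℝ) ^ 2 := by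
          apply div_nonneg (by nlinarith) (by positivity)
        linarith
      have hprod : (∏ i ∈ Finset.Icc 2 (k + 2),
            (1 + 2 / (i : ℝ) + 2 * q₀ * (1 - q₀) / (i : ℝ) ^ 2))
          = P * (1 + 2 / ((k:ℝ) + 2) + 2 * q₀ * (1 - q₀) / ((k:ℝ) + 2) ^ 2) := by
        rw [show k + 2 = (k + 1) + 1 from rfl, Finset.prod_Icc_succ_top (by omega)]
        push_cast
        ring
      -- abbreviations for the coefficients at step k+2
      have hA0 : (0:ℝ) ≤ 1 + 2 / ((k:ℝ) + 2) + 2 * q₀ * (1 - q₀) / ((k:ℝ) + 2) ^ 2 := by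
        have h1i : 0 ≤ 2 / ((k:ℝ) + 2) := by positivity
        have h2i : 0 ≤ 2 * q₀ * (1 - q₀) / ((k:ℝ) + 2) ^ 2 :=
          div_nonneg (by nlinarith) (by positivity)
        linarith
      have hB0 : (0:ℝ) ≤ (1 - 2 * q₀) ^ 2 / ((k:ℝ) + 2) ^ 2 := by positivity
      have hAA : (0:ℝ) ≤ (1 + 2 / ((k:ℝ) + 2) + 2 * q₁ * (1 - q₁) / ((k:ℝ) + 2) ^ 2)
          - (1 + 2 / ((k:ℝ) + 2) + 2 * q₀ * (1 - q₀) / ((k:ℝ) + 2) ^ 2) := by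
        have h := div_nonneg (show (0:ℝ) ≤ 2 * q₁ * (1 - q₁) - 2 * q₀ * (1 - q₀) by nlinarith)
          (show (0:ℝ) ≤ ((k:ℝ) + 2) ^ 2 by positivity)
        rw [sub_div] at h
        linarith
      have hC0 : (0:ℝ) ≤ 1 + 2 * (1 - 2 * q₀) / ((k:ℝ) + 2) + (1 - 2 * q₀) ^ 2 / ((k:ℝ) + 2) ^ 2 := by
        have h1i : 0 ≤ 2 * (1 - 2 * q₀) / ((k:ℝ) + 2) := div_nonneg (by linarith) (by linarith)
        have h2i : 0 ≤ (1 - 2 * q₀) ^ 2 / ((k:ℝ) + 2) ^ 2 := by positivity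
        linarith
      have hD0 : (0:ℝ) ≤ 2 * q₀ / ((k:ℝ) + 2) + 2 * q₀ * (1 - q₀) / ((k:ℝ) + 2) ^ 2 := by
        have h1i : 0 ≤ 2 * q₀ / ((k:ℝ) + 2) := div_nonneg (by linarith) (by linarith)
        have h2i : 0 ≤ 2 * q₀ * (1 - q₀) / ((k:ℝ) + 2) ^ 2 :=
          div_nonneg (by nlinarith) (by positivity)
        linarith
      have hDD : (0:ℝ) ≤ (2 * q₁ / ((k:ℝ) + 2) + 2 * q₁ * (1 - q₁) / ((k:ℝ) + 2) ^ 2)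
          - (2 * q₀ / ((k:ℝ) + 2) + 2 * q₀ * (1 - q₀) / ((k:ℝ) + 2) ^ 2) := by
        have e1 := div_nonneg (show (0:ℝ) ≤ 2 * q₁ - 2 * q₀ by linarith)
          (show (0:ℝ) ≤ (k:ℝ) + 2 by linarith)
        have e2 := div_nonneg (show (0:ℝ) ≤ 2 * q₁ * (1 - q₁) - 2 * q₀ * (1 - q₀) by nlinarith)
          (show (0:ℝ) ≤ ((k:ℝ) + 2) ^ 2 by positivity)
        rw [sub_div] at e1 e2
        linarith
      have h2g : 0 ≤ 2 * g q₁ (k + 2) - f q₁ (k + 2) := by linarith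
      have hdf : 0 ≤ f q₀ (k + 2) - f q₁ (k + 2) := by
        have := mul_nonneg hdf2 hPnn
        linarith
      have keyF : (1 + 2 / ((k:ℝ) + 2) + 2 * q₀ * (1 - q₀) / ((k:ℝ) + 2) ^ 2) * f q₀ (k + 2)
            + ((1 - 2 * q₀) ^ 2 / ((k:ℝ) + 2) ^ 2) * g q₀ (k + 2)
            - ((1 + 2 / ((k:ℝ) + 2) + 2 * q₁ * (1 - q₁) / ((k:ℝ) + 2) ^ 2) * f q₁ (k + 2)
              + ((1 - 2 * q₁) ^ 2 / ((k:ℝ) + 2) ^ 2) * g q₁ (k + 2))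
          = (1 + 2 / ((k:ℝ) + 2) + 2 * q₀ * (1 - q₀) / ((k:ℝ) + 2) ^ 2)
              * (f q₀ (k + 2) - f q₁ (k + 2))
            + ((1 - 2 * q₀) ^ 2 / ((k:ℝ) + 2) ^ 2) * (g q₀ (k + 2) - g q₁ (k + 2))
            + ((1 + 2 / ((k:ℝ) + 2) + 2 * q₁ * (1 - q₁) / ((k:ℝ) + 2) ^ 2)
                - (1 + 2 / ((k:ℝ) + 2) + 2 * q₀ * (1 - q₀) / ((k:ℝ) + 2) ^ 2))
              * (2 * g q₁ (k + 2) - f q₁ (k + 2)) := by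
        field_simp
        ring
      have keyG : (1 + 2 * (1 - 2 * q₀) / ((k:ℝ) + 2) + (1 - 2 * q₀) ^ 2 / ((k:ℝ) + 2) ^ 2) * g q₀ (k + 2)
            + (2 * q₀ / ((k:ℝ) + 2) + 2 * q₀ * (1 - q₀) / ((k:ℝ) + 2) ^ 2) * f q₀ (k + 2)
            - ((1 + 2 * (1 - 2 * q₁) / ((k:ℝ) + 2) + (1 - 2 * q₁) ^ 2 / ((k:ℝ) + 2) ^ 2) * g q₁ (k + 2)
              + (2 * q₁ / ((k:ℝ) + 2) + 2 * q₁ * (1 - q₁) / ((k:ℝ) + 2) ^ 2) * f q₁ (k + 2))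
          = (1 + 2 * (1 - 2 * q₀) / ((k:ℝ) + 2) + (1 - 2 * q₀) ^ 2 / ((k:ℝ) + 2) ^ 2)
              * (g q₀ (k + 2) - g q₁ (k + 2))
            + (2 * q₀ / ((k:ℝ) + 2) + 2 * q₀ * (1 - q₀) / ((k:ℝ) + 2) ^ 2)
              * (f q₀ (k + 2) - f q₁ (k + 2))
            + ((2 * q₁ / ((k:ℝ) + 2) + 2 * q₁ * (1 - q₁) / ((k:ℝ) + 2) ^ 2)
                - (2 * q₀ / ((k:ℝ) + 2) + 2 * q₀ * (1 - q₀) / ((k:ℝ) + 2) ^ 2))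
              * (2 * g q₁ (k + 2) - f q₁ (k + 2)) := by
        field_simp
        ring
      constructor
      · rw [show k + 2 + 1 - 1 = k + 2 from rfl, hprod, hF0, hF1]
        have step1 : (1 + 2 / ((k:ℝ) + 2) + 2 * q₀ * (1 - q₀) / ((k:ℝ) + 2) ^ 2)
              * ((f q₀ 2 - f q₁ 2) * P)
            ≤ (1 + 2 / ((k:ℝ) + 2) + 2 * q₀ * (1 - q₀) / ((k:ℝ) + 2) ^ 2)
              * (f q₀ (k + 2) - f q₁ (k + 2)) :=
          mul_le_mul_of_nonneg_left hf' hA0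
        have step2 : 0 ≤ ((1 - 2 * q₀) ^ 2 / ((k:ℝ) + 2) ^ 2) * (g q₀ (k + 2) - g q₁ (k + 2)) :=
          mul_nonneg hB0 hg'
        have step3 : 0 ≤ ((1 + 2 / ((k:ℝ) + 2) + 2 * q₁ * (1 - q₁) / ((k:ℝ) + 2) ^ 2)
              - (1 + 2 / ((k:ℝ) + 2) + 2 * q₀ * (1 - q₀) / ((k:ℝ) + 2) ^ 2))
            * (2 * g q₁ (k + 2) - f q₁ (k + 2)) := mul_nonneg hAA h2g
        linarith only [keyF, step1, step2, step3]
      · rw [hG0, hG1]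
        have step1 : 0 ≤ (1 + 2 * (1 - 2 * q₀) / ((k:ℝ) + 2) + (1 - 2 * q₀) ^ 2 / ((k:ℝ) + 2) ^ 2)
            * (g q₀ (k + 2) - g q₁ (k + 2)) := mul_nonneg hC0 hg'
        have step2 : 0 ≤ (2 * q₀ / ((k:ℝ) + 2) + 2 * q₀ * (1 - q₀) / ((k:ℝ) + 2) ^ 2)
            * (f q₀ (k + 2) - f q₁ (k + 2)) := mul_nonneg hD0 hdf
        have step3 : 0 ≤ ((2 * q₁ / ((k:ℝ) + 2) + 2 * q₁ * (1 - q₁) / ((k:ℝ) + 2) ^ 2)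
              - (2 * q₀ / ((k:ℝ) + 2) + 2 * q₀ * (1 - q₀) / ((k:ℝ) + 2) ^ 2))
            * (2 * g q₁ (k + 2) - f q₁ (k + 2)) := mul_nonneg hDD h2g
        linarith only [keyG, step1, step2, step3]
end

section
/- Sequences satisfying E[N₁(n+1)] = (1 − 1/n + c/n²) E[N₁(n)] + 2 with N₁(1) = 2 and 0 ≤ c ≤ 1/4 obey n ≤ E[N₁(n)] ≤ n + 2 for all n ≥ 1. -/
theorem stmt19 (c : ℝ) (hc0 : 0 ≤ c) (hc1 : c ≤ 1 / 4) (E : ℕ → ℝ) (hE1 : E 1 = 2)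
    (hrec : ∀ n : ℕ, 1 ≤ n → E (n + 1) = (1 - 1 / (n : ℝ) + c / (n : ℝ) ^ 2) * E n + 2) :
    ∀ n : ℕ, 1 ≤ n → (n : ℝ) ≤ E n ∧ E n ≤ (n : ℝ) + 2 := by
  intro n hn
  induction n, hn using Nat.le_induction with
  | base => rw [hE1]; norm_num
  | succ n hn ih =>
    obtain ⟨h1, h2⟩ := ih
    have hrn : (1:ℝ) ≤ (n:ℝ) := by exact_mod_cast hn
    have hpos : (0:ℝ) < (n:ℝ) := by linarith
    have hinv : 1 / (n:ℝ) * (n:ℝ) = 1 := by field_simp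
    have hcn : c / (n:ℝ)^2 * (n:ℝ)^2 = c := by field_simp
    have hf : 0 ≤ 1 - 1/(n:ℝ) + c/(n:ℝ)^2 := by
      have h4 : 1/(n:ℝ) ≤ 1 := by
        rw [div_le_one hpos]; exact hrn
      have h5 : 0 ≤ c/(n:ℝ)^2 := div_nonneg hc0 (by positivity)
      linarith
    rw [hrec n hn]
    push_cast
    constructor
    · nlinarith [mul_le_mul_of_nonneg_left h1 hf, sq_nonneg ((n:ℝ) - 1)]
    · have hEn : 0 ≤ E n := by linarith
      have key : (1 - 1/(n:ℝ) + c/(n:ℝ)^2) * E n ≤ (1 - 1/(n:ℝ) + c/(n:ℝ)^2) * ((n:ℝ) + 2) :=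
        mul_le_mul_of_nonneg_left h2 hf
      have key2 : (1 - 1/(n:ℝ) + c/(n:ℝ)^2) * ((n:ℝ) + 2) ≤ (n:ℝ) + 1 := by
        rw [← sub_nonneg]
        have expand : (n:ℝ) + 1 - (1 - 1/(n:ℝ) + c/(n:ℝ)^2) * ((n:ℝ) + 2)
            = ((n:ℝ)^2 * ((n:ℝ) + 1) - ((n:ℝ)^2 - (n:ℝ) + c) * ((n:ℝ) + 2)) / (n:ℝ)^2 := by
          field_simp
        rw [expand]
        apply div_nonneg _ (by positivity)
        nlinarith
      linarith
end
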